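/- Let ā > 0, r₀ > 0, b > 1 with ā·b^{r₀} > 1, and let 0 < γ₂ < γ₁ ≤ b. For each integer k ≥ 0 let y_k : [0,∞) → [0,∞) be a C¹ function, and assume that for every integer k ≥ 1 and every t > 0: y_k'(t) ≤ −y_k(t) + ā·b^{r₀k}·(y_{k−1}(t)^{γ₁} + y_{k−1}(t)^{γ₂}). Assume further that M₀ = sup_{t ≥ 0} y₀(t) < ∞ and that there is a constant K ≥ 1 with y_k(0) ≤ K^{b^k} for all k ≥ 0. Then for every integer k ≥ 0 and every t ≥ 0: y_k(t) ≤ (2ā)^{(b^k−1)/(b−1)} · b^{r₀·( b(b^k−1)/(b−1)² − k/(b−1) )} · max{ M₀^{b^k}, K^{b^k} }. -/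
import Mathlib


open Set

private lemma ode_bound (f : ℝ → ℝ) (hc : ContinuousOn f (Ici 0))
    (hd : ∀ t : ℝ, 0 < t → DifferentiableAt ℝ f t)
    (B c : ℝ) (h0 : f 0 ≤ B) (hcB : c ≤ B)
    (hder : ∀ t : ℝ, 0 < t → deriv f t ≤ -f t + c) :
    ∀ t : ℝ, 0 ≤ t → f t ≤ B := by
  have hganti : AntitoneOn (fun s => Real.exp s * (f s - B)) (Ici 0) := by
    apply antitoneOn_of_deriv_nonpos (convex_Ici 0)
    · exact Real.continuous_exp.continuousOn.mul (hc.sub continuousOn_const)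
    · intro s hs
      rw [interior_Ici] at hs
      exact ((Real.differentiable_exp s).mul
        ((hd s hs).sub_const B)).differentiableWithinAt
    · intro s hs
      rw [interior_Ici] at hs
      have h1 : HasDerivAt (fun x => f x - B) (deriv f s) s :=
        ((hd s hs).hasDerivAt).sub_const B
      have hds : HasDerivAt (fun s => Real.exp s * (f s - B))
          (Real.exp s * (f s - B) + Real.exp s * deriv f s) s := by
        exact (Real.hasDerivAt_exp s).mul h1
      rw [hds.deriv]
      have h2 := hder s hs
      nlinarith [Real.exp_pos s,
        mul_le_mul_of_nonneg_left h2 (Real.exp_pos s).le,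
        mul_le_mul_of_nonneg_left hcB (Real.exp_pos s).le]
  intro t ht
  have hle := hganti self_mem_Ici ht ht
  simp only [Real.exp_zero, one_mul] at hle
  by_contra hcon
  push_neg at hcon
  have hpos : 0 < Real.exp t * (f t - B) :=
    mul_pos (Real.exp_pos t) (by linarith)
  linarith

/-- Let `ā > 0`, `r₀ > 0`, `b > 1` with `ā·b^{r₀} > 1`, and let
`0 < γ₂ < γ₁ ≤ b`. For each integer `k ≥ 0` let `y_k : [0,∞) → [0,∞)` be a `C¹` function, and
assume that for every integer `k ≥ 1` and every `t > 0`: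
`y_k'(t) ≤ −y_k(t) + ā·b^{r₀k}·(y_{k−1}(t)^{γ₁} + y_{k−1}(t)^{γ₂})`.
Assume further that `M₀ = sup_{t ≥ 0} y₀(t) < ∞` and that there is a constant `K ≥ 1` with
`y_k(0) ≤ K^{b^k}` for all `k ≥ 0`. Then for every integer `k ≥ 0` and every `t ≥ 0`:
`y_k(t) ≤ (2ā)^{(b^k−1)/(b−1)} · b^{r₀(b(b^k−1)/(b−1)² − k/(b−1))} · max{M₀^{b^k}, K^{b^k}}`. -/
theorem stmt_1 (abar r₀ b γ₁ γ₂ : ℝ)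
    (habar : 0 < abar) (hr₀ : 0 < r₀) (hb : 1 < b)
    (ha : 1 < abar * b ^ r₀)
    (hγ₂ : 0 < γ₂) (hγ₂₁ : γ₂ < γ₁) (hγ₁ : γ₁ ≤ b)
    (y : ℕ → ℝ → ℝ)
    (hnonneg : ∀ k, ∀ t : ℝ, 0 ≤ t → 0 ≤ y k t)
    (hcont : ∀ k, ContinuousOn (y k) (Ici (0 : ℝ)))
    (hdiff : ∀ k, ∀ t : ℝ, 0 < t → DifferentiableAt ℝ (y k) t)
    (hineq : ∀ k : ℕ, 1 ≤ k → ∀ t : ℝ, 0 < t →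
      deriv (y k) t ≤ - y k t +
        abar * b ^ (r₀ * k) * (y (k - 1) t ^ γ₁ + y (k - 1) t ^ γ₂))
    (hbdd : BddAbove (y 0 '' Ici (0 : ℝ)))
    (M₀ : ℝ) (hM₀ : M₀ = sSup (y 0 '' Ici (0 : ℝ)))
    (K : ℝ) (hK : 1 ≤ K) (hinit : ∀ k : ℕ, y k 0 ≤ K ^ (b ^ k)) :
    ∀ k : ℕ, ∀ t : ℝ, 0 ≤ t →
      y k t ≤ (2 * abar) ^ ((b ^ k - 1) / (b - 1)) *
        b ^ (r₀ * (b * (b ^ k - 1) / (b - 1) ^ 2 - k / (b - 1))) *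
        max (M₀ ^ (b ^ k)) (K ^ (b ^ k)) := by
  have hb0 : (0:ℝ) < b := by linarith
  have hb1 : (0:ℝ) < b - 1 := by linarith
  have hbr : (0:ℝ) < b ^ r₀ := Real.rpow_pos_of_pos hb0 r₀
  have h2a0 : (0:ℝ) < 2 * abar := by linarith
  have h2a : (1:ℝ) ≤ 2 * abar * b ^ r₀ := by nlinarith
  set L : ℝ := max M₀ K with hLdef
  have hL1 : 1 ≤ L := le_trans hK (le_max_right _ _)
  have hL0 : (0:ℝ) ≤ L := by linarith
  have hM00 : 0 ≤ M₀ := by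
    rw [hM₀]
    exact le_trans (hnonneg 0 0 le_rfl) (le_csSup hbdd ⟨0, self_mem_Ici, rfl⟩)
  have hmax : ∀ k : ℕ, max (M₀ ^ ((b:ℝ) ^ k)) (K ^ ((b:ℝ) ^ k)) = L ^ ((b:ℝ) ^ k) := by
    intro k
    have hp : (0:ℝ) ≤ (b:ℝ) ^ k := by positivity
    rcases le_total M₀ K with h | h
    · rw [max_eq_right (Real.rpow_le_rpow hM00 h hp), hLdef, max_eq_right h]
    · rw [max_eq_left (Real.rpow_le_rpow (by linarith : (0:ℝ) ≤ K) h hp), hLdef,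
        max_eq_left h]
  have hek : ∀ k : ℕ, (k:ℝ) ≤ (b ^ k - 1) / (b - 1) := by
    intro k
    rw [le_div_iff₀ hb1]
    have h := one_add_mul_le_pow (a := b - 1) (by linarith) k
    rw [show (1:ℝ) + (b - 1) = b by ring] at h
    linarith
  have he0 : ∀ k : ℕ, (0:ℝ) ≤ (b ^ k - 1) / (b - 1) := fun k =>
    le_trans (Nat.cast_nonneg k) (hek k)
  have hFe : ∀ k : ℕ,
      (b ^ k - 1) / (b - 1) ≤ b * (b ^ k - 1) / (b - 1) ^ 2 - (k:ℝ) / (b - 1) := by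
    intro k
    have h := hek k
    rw [le_div_iff₀ hb1] at h
    have key : b * (b ^ k - 1) / (b - 1) ^ 2 - (k:ℝ) / (b - 1) - (b ^ k - 1) / (b - 1)
        = ((b ^ k - 1) - (k:ℝ) * (b - 1)) / (b - 1) ^ 2 := by
      field_simp
      ring
    have h2 : (0:ℝ) ≤ ((b ^ k - 1) - (k:ℝ) * (b - 1)) / (b - 1) ^ 2 :=
      div_nonneg (by linarith) (by positivity)
    linarith
  have hP1 : ∀ k : ℕ, 1 ≤ (2 * abar) ^ ((b ^ k - 1) / (b - 1)) *
      b ^ (r₀ * (b * (b ^ k - 1) / (b - 1) ^ 2 - (k:ℝ) / (b - 1))) := by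
    intro k
    have h1 : (1:ℝ) ≤ (2 * abar) ^ ((b ^ k - 1) / (b - 1)) *
        b ^ (r₀ * ((b ^ k - 1) / (b - 1))) := by
      rw [Real.rpow_mul hb0.le, ← Real.mul_rpow h2a0.le hbr.le]
      exact Real.one_le_rpow h2a (he0 k)
    have h2 : b ^ (r₀ * ((b ^ k - 1) / (b - 1))) ≤
        b ^ (r₀ * (b * (b ^ k - 1) / (b - 1) ^ 2 - (k:ℝ) / (b - 1))) :=
      Real.rpow_le_rpow_of_exponent_le hb.le
        (mul_le_mul_of_nonneg_left (hFe k) hr₀.le)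
    calc (1:ℝ) ≤ _ := h1
      _ ≤ _ := mul_le_mul_of_nonneg_left h2 (by positivity)
  intro k
  induction k with
  | zero =>
    intro t ht
    have hy0 : y 0 t ≤ M₀ := by
      rw [hM₀]; exact le_csSup hbdd ⟨t, ht, rfl⟩
    simp only [pow_zero, sub_self, zero_div, mul_zero, Nat.cast_zero, sub_zero,
      Real.rpow_zero, Real.rpow_one, one_mul]
    exact le_trans hy0 (le_max_left _ _)
  | succ k ih =>
    intro t ht
    rw [hmax (k+1)]
    set Pk : ℝ := (2 * abar) ^ ((b ^ k - 1) / (b - 1)) *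
        b ^ (r₀ * (b * (b ^ k - 1) / (b - 1) ^ 2 - (k:ℝ) / (b - 1))) with hPkdef
    have hPk1 : 1 ≤ Pk := by rw [hPkdef]; exact hP1 k
    have ihD : ∀ s : ℝ, 0 ≤ s → y k s ≤ Pk * L ^ ((b:ℝ) ^ k) := by
      intro s hs
      have h := ih s hs
      rwa [hmax k] at h
    have hLbk : 1 ≤ L ^ ((b:ℝ) ^ k) := Real.one_le_rpow hL1 (by positivity)
    have hD1 : 1 ≤ Pk * L ^ ((b:ℝ) ^ k) := by nlinarith
    have hD0 : (0:ℝ) ≤ Pk * L ^ ((b:ℝ) ^ k) := by linarith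
    refine ode_bound (y (k+1)) (hcont (k+1)) (hdiff (k+1)) _
      (abar * b ^ (r₀ * ((k:ℝ) + 1)) *
        ((Pk * L ^ ((b:ℝ) ^ k)) ^ γ₁ + (Pk * L ^ ((b:ℝ) ^ k)) ^ γ₂)) ?_ ?_ ?_ t ht
    · -- initial condition
      calc y (k+1) 0 ≤ K ^ ((b:ℝ) ^ (k+1)) := hinit (k+1)
        _ ≤ L ^ ((b:ℝ) ^ (k+1)) :=
          Real.rpow_le_rpow (by linarith) (le_max_right _ _) (by positivity)
        _ ≤ _ := le_mul_of_one_le_left (Real.rpow_nonneg hL0 _) (hP1 (k+1))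
    · -- c ≤ B
      push_cast
      have hg1 : (Pk * L ^ ((b:ℝ) ^ k)) ^ γ₁ ≤ (Pk * L ^ ((b:ℝ) ^ k)) ^ b :=
        Real.rpow_le_rpow_of_exponent_le hD1 hγ₁
      have hg2 : (Pk * L ^ ((b:ℝ) ^ k)) ^ γ₂ ≤ (Pk * L ^ ((b:ℝ) ^ k)) ^ b :=
        Real.rpow_le_rpow_of_exponent_le hD1 (by linarith)
      have hpos : (0:ℝ) ≤ abar * b ^ (r₀ * ((k:ℝ) + 1)) := by positivity
      have e1 : (Pk * L ^ ((b:ℝ) ^ k)) ^ b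
          = (2 * abar) ^ ((b ^ k - 1) / (b - 1) * b) *
            b ^ (r₀ * (b * (b ^ k - 1) / (b - 1) ^ 2 - (k:ℝ) / (b - 1)) * b) *
            L ^ ((b:ℝ) ^ (k+1)) := by
        rw [hPkdef, Real.mul_rpow (by positivity) (by positivity),
          Real.mul_rpow (by positivity) (by positivity),
          ← Real.rpow_mul h2a0.le, ← Real.rpow_mul hb0.le, ← Real.rpow_mul hL0,
          ← pow_succ]
      have hee : (b ^ (k+1) - 1) / (b - 1) = 1 + (b ^ k - 1) / (b - 1) * b := by
        field_simp
        ring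
      have hFF : r₀ * (b * (b ^ (k+1) - 1) / (b - 1) ^ 2 - ((k:ℝ) + 1) / (b - 1))
          = r₀ * ((k:ℝ) + 1) +
            r₀ * (b * (b ^ k - 1) / (b - 1) ^ 2 - (k:ℝ) / (b - 1)) * b := by
        field_simp
        ring
      have key : abar * b ^ (r₀ * ((k:ℝ) + 1)) * (2 * (Pk * L ^ ((b:ℝ) ^ k)) ^ b)
          = (2 * abar) ^ ((b ^ (k+1) - 1) / (b - 1)) *
            b ^ (r₀ * (b * (b ^ (k+1) - 1) / (b - 1) ^ 2 - ((k:ℝ) + 1) / (b - 1))) *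
            L ^ ((b:ℝ) ^ (k+1)) := by
        rw [hee, hFF, Real.rpow_add h2a0, Real.rpow_add hb0, Real.rpow_one, e1]
        ring
      calc abar * b ^ (r₀ * ((k:ℝ) + 1)) *
            ((Pk * L ^ ((b:ℝ) ^ k)) ^ γ₁ + (Pk * L ^ ((b:ℝ) ^ k)) ^ γ₂)
          ≤ abar * b ^ (r₀ * ((k:ℝ) + 1)) * (2 * (Pk * L ^ ((b:ℝ) ^ k)) ^ b) :=
            mul_le_mul_of_nonneg_left (by linarith) hpos
        _ = _ := key
    · -- derivative inequality
      intro s hs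
      have h := hineq (k+1) (Nat.le_add_left 1 k) s hs
      simp only [Nat.add_sub_cancel] at h
      push_cast at h
      have hy := ihD s hs.le
      have hyn := hnonneg k s hs.le
      have hg1 : y k s ^ γ₁ ≤ (Pk * L ^ ((b:ℝ) ^ k)) ^ γ₁ :=
        Real.rpow_le_rpow hyn hy (by linarith)
      have hg2 : y k s ^ γ₂ ≤ (Pk * L ^ ((b:ℝ) ^ k)) ^ γ₂ :=
        Real.rpow_le_rpow hyn hy hγ₂.le
      have hpos : (0:ℝ) ≤ abar * b ^ (r₀ * ((k:ℝ) + 1)) := by positivity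
      have hmul := mul_le_mul_of_nonneg_left (add_le_add hg1 hg2) hpos
      linarith
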